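/- arXiv:2212.12614 — 2 statements merged into one kernel-verified Lean document; each statement's English description precedes it below -/
import Mathlib

section
/- Uniform bound on the imaginary part of the logarithmic path integral (claim |Im Ψₙ| ≤ C₀ in the proof of the parallel-transport limit theorem): Let γ : [0,1] → ℂ be continuously differentiable, let m > 0 satisfy |γ′(t)| ≥ m for all t ∈ [0,1], and let η > 0 satisfy |γ′(t) − γ′(u)| ≤ m/10 whenever t, u ∈ [0,1] with |t − u| ≤ η. Then for every s ∈ ℂ with s ∉ γ([0,1]): | Im ∫₀¹ γ′(t)/(γ(t) − s) dt | ≤ ⌈1/η⌉ · (π + arcsin(1/10)). -/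
open Set intervalIntegral

/-!
Cut `[0, 1]` into `⌈1/η⌉` pieces of length at most `η`. On one piece all values of `γ'` lie
within `‖γ' u‖ / 10` of each other, so their arguments spread over at most `arcsin (1/10)`.
After rotating `γ' a` onto the positive real axis they lie in a sector of the right half plane,
hence `Re (γ - s)` increases and crosses the imaginary axis at most once. On either side of the
crossing the integral is a difference of principal arguments of `±(γ - s)`; at the crossing these
are `±π/2`, and the sector controls the arguments at the two endpoints, so the argument of
`γ - s` varies by at most `π + arcsin (1/10)` on the piece.
-/

open Real MeasureTheory

namespace Complex

lemma arg_eq_arctan_im_div_re {z : ℂ} (hz : 0 < z.re) : z.arg = Real.arctan (z.im / z.re) := by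
  rw [← tan_arg, Real.arctan_tan (neg_pi_div_two_lt_arg_iff.2 (Or.inl hz))
    (arg_lt_pi_div_two_iff.2 (Or.inl hz))]

lemma arg_conj_of_re_nonneg {z : ℂ} (hz : 0 ≤ z.re) : (starRingEnd ℂ z).arg = -z.arg := by
  rw [arg_conj, if_neg]
  exact fun h => (arg_eq_pi_iff.1 h).1.not_ge hz

lemma abs_arg_sub_arg_le_pi {z w : ℂ} (hz : 0 ≤ z.re) (hw : 0 ≤ w.re) :
    |z.arg - w.arg| ≤ π := by
  have := abs_arg_le_pi_div_two_iff.2 hz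
  have := abs_arg_le_pi_div_two_iff.2 hw
  rw [abs_le] at *
  constructor <;> linarith

lemma abs_arg_sub_arg_le_arcsin {z w : ℂ} {k : ℝ} (hz : 0 < z.re) (hw : 0 < w.re)
    (hk : k ≤ 1) (h : ‖z - w‖ ≤ k * ‖w‖) : |z.arg - w.arg| ≤ Real.arcsin k := by
  have hz0 : z ≠ 0 := fun h0 => by simp [h0] at hz
  have hw0 : w ≠ 0 := fun h0 => by simp [h0] at hw
  set u := z / w
  have hu : ‖u - 1‖ ≤ k := by
    rwa [← div_self hw0, ← sub_div, norm_div, div_le_iff₀ (norm_pos_iff.2 hw0)]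
  have hk0 : 0 ≤ k := (norm_nonneg _).trans hu
  have hdist : (u.re - 1) ^ 2 + u.im ^ 2 ≤ k ^ 2 := by
    have := pow_le_pow_left₀ (norm_nonneg _) hu 2
    rwa [← normSq_eq_norm_sq, normSq_apply, sub_re, sub_im, one_re, one_im, sub_zero, ← sq,
      ← sq] at this
  -- The cone `|im| ≤ k ‖·‖` touches the disc `‖· - 1‖ ≤ k` where `re = 1 - k ^ 2`.
  have hsin : |u.im / ‖u‖| ≤ k := by
    rw [abs_div, abs_norm]
    refine div_le_of_le_mul₀ (norm_nonneg _) hk0 (abs_le_of_sq_le_sq' ?_ (by positivity)).2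
    have := mul_le_mul_of_nonneg_right hdist (by nlinarith : 0 ≤ 1 - k ^ 2)
    rw [sq_abs, mul_pow, ← normSq_eq_norm_sq, normSq_apply]
    nlinarith [sq_nonneg (u.re - (1 - k ^ 2))]
  have harg : u.arg = z.arg - w.arg := by
    have hzarg := abs_arg_lt_pi_div_two_iff.2 (Or.inl hz)
    have hwarg := abs_arg_lt_pi_div_two_iff.2 (Or.inl hw)
    rw [← arg_coe_angle_toReal_eq_arg, arg_div_coe_angle hz0 hw0, ← Real.Angle.coe_sub,
      Real.Angle.toReal_coe_eq_self_iff_mem_Ioc]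
    constructor <;> linarith [abs_lt.1 hzarg, abs_lt.1 hwarg]
  rw [← harg, arg_of_re_nonneg (by nlinarith), abs_le, ← Real.arcsin_neg]
  exact ⟨Real.arcsin_le_arcsin (abs_le.1 hsin).1, Real.arcsin_le_arcsin (abs_le.1 hsin).2⟩

end Complex

lemma monotoneOn_clm_comp_of_nonneg {E : Type*} [NormedAddCommGroup E] [NormedSpace ℝ E]
    {f f' : ℝ → E} {a b : ℝ} (L : E →L[ℝ] ℝ) (hf : ContinuousOn f (Icc a b))
    (hd : ∀ t ∈ Ioo a b, HasDerivAt f (f' t) t) (hL : ∀ t ∈ Ioo a b, 0 ≤ L (f' t)) :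
    MonotoneOn (L ∘ f) (Icc a b) := by
  refine monotoneOn_of_hasDerivWithinAt_nonneg (convex_Icc a b)
    (L.continuous.comp_continuousOn hf) (fun t ht => ?_) (by rwa [interior_Icc])
  rw [interior_Icc] at ht ⊢
  exact (L.hasFDerivAt.comp_hasDerivAt t (hd t ht)).hasDerivWithinAt

def slopeSector (p q : ℝ) : Set ℂ := {z | 0 ≤ z.re ∧ -q * z.re ≤ z.im ∧ z.im ≤ p * z.re}

section LogDerivative

variable {f f' : ℝ → ℂ} {a b p q : ℝ}

lemma conj_mem_slopeSector {z : ℂ} (hz : z ∈ slopeSector p q) :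
    starRingEnd ℂ z ∈ slopeSector q p := by
  obtain ⟨h0, hlo, hup⟩ := hz
  refine ⟨h0, ?_, ?_⟩ <;> simp only [Complex.conj_re, Complex.conj_im] <;> linarith

lemma sub_mem_slopeSector (hf : ContinuousOn f (Icc a b))
    (hd : ∀ t ∈ Ioo a b, HasDerivAt f (f' t) t) (hsec : ∀ t ∈ Ioo a b, f' t ∈ slopeSector p q)
    {u v : ℝ} (hu : u ∈ Icc a b) (hv : v ∈ Icc a b) (huv : u ≤ v) :
    f v - f u ∈ slopeSector p q := by
  have key (L : ℂ →L[ℝ] ℝ) (hL : ∀ z ∈ slopeSector p q, 0 ≤ L z) : 0 ≤ L (f v - f u) := by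
    rw [map_sub, sub_nonneg]
    exact monotoneOn_clm_comp_of_nonneg L hf hd (fun t ht => hL _ (hsec t ht)) hu hv huv
  have hlo := key (Complex.imCLM + q • Complex.reCLM) fun z hz => by
    simp only [add_apply, smul_apply, Complex.reCLM_apply, Complex.imCLM_apply, smul_eq_mul]
    linarith [hz.2.1]
  have hup := key (p • Complex.reCLM - Complex.imCLM) fun z hz => by
    simp only [sub_apply, smul_apply, Complex.reCLM_apply, Complex.imCLM_apply, smul_eq_mul]
    linarith [hz.2.2]
  simp only [add_apply, sub_apply, smul_apply, Complex.reCLM_apply, Complex.imCLM_apply,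
    smul_eq_mul] at hlo hup
  exact ⟨key Complex.reCLM fun z hz => hz.1, by linarith, by linarith⟩

lemma integral_div_eq_log_sub_log (hab : a ≤ b) (hf : ContinuousOn f (Icc a b))
    (hd : ∀ t ∈ Ioo a b, HasDerivAt f (f' t) t)
    (hint : IntervalIntegrable (fun t => f' t / f t) volume a b)
    (hslit : ∀ t ∈ Icc a b, f t ∈ Complex.slitPlane) :
    ∫ t in a..b, f' t / f t = Complex.log (f b) - Complex.log (f a) :=
  integral_eq_sub_of_hasDeriv_right_of_le hab (hf.clog hslit)
    (fun t ht => ((hd t ht).clog_real (hslit t (Ioo_subset_Icc_self ht))).hasDerivWithinAt) hint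

lemma im_integral_div_eq_arg_sub_arg (hab : a ≤ b) (hf : ContinuousOn f (Icc a b))
    (hd : ∀ t ∈ Ioo a b, HasDerivAt f (f' t) t)
    (hint : IntervalIntegrable (fun t => f' t / f t) volume a b)
    (hne : ∀ t ∈ Icc a b, f t ≠ 0) (hre : ∀ t ∈ Icc a b, 0 ≤ (f t).re) :
    (∫ t in a..b, f' t / f t).im = (f b).arg - (f a).arg := by
  have hslit (t : ℝ) (ht : t ∈ Icc a b) : f t ∈ Complex.slitPlane :=
    Complex.mem_slitPlane_iff.2 <| (hre t ht).lt_or_eq.imp_right fun h him =>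
      hne t ht (Complex.ext h.symm him)
  rw [integral_div_eq_log_sub_log hab hf hd hint hslit, Complex.sub_im, Complex.log_im,
    Complex.log_im]

lemma im_integral_div_eq_arg_neg_sub_arg_neg (hab : a ≤ b) (hf : ContinuousOn f (Icc a b))
    (hd : ∀ t ∈ Ioo a b, HasDerivAt f (f' t) t)
    (hint : IntervalIntegrable (fun t => f' t / f t) volume a b)
    (hne : ∀ t ∈ Icc a b, f t ≠ 0) (hre : ∀ t ∈ Icc a b, (f t).re ≤ 0) :
    (∫ t in a..b, f' t / f t).im = (-f b).arg - (-f a).arg := by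
  simp_rw [← neg_div_neg_eq (f' _)] at hint ⊢
  exact im_integral_div_eq_arg_sub_arg hab hf.neg (fun t ht => (hd t ht).neg) hint
    (fun t ht => neg_ne_zero.2 (hne t ht)) (fun t ht => by simpa using hre t ht)

lemma abs_arg_change_across_imaginaryAxis_le {A B C : ℂ} (hA : A.re < 0) (hB : 0 < B.re)
    (hC : C.re = 0) (hC0 : C ≠ 0) (hAC : C - A ∈ slopeSector p q)
    (hCB : B - C ∈ slopeSector p q) :
    |(-C).arg - (-A).arg + (B.arg - C.arg)| ≤ π + arctan p + arctan q := by
  wlog hCim : 0 < C.im generalizing A B C p q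
  · -- Conjugation swaps `p` and `q` and negates every argument involved.
    have hCim : C.im < 0 := (not_lt.1 hCim).lt_of_ne fun h => hC0 (Complex.ext hC h)
    have := this (A := starRingEnd ℂ A) (B := starRingEnd ℂ B) (C := starRingEnd ℂ C)
      (by simpa using hA) (by simpa using hB) (by simpa using hC) (by simpa using hC0)
      (by simpa using conj_mem_slopeSector hAC) (by simpa using conj_mem_slopeSector hCB)
      (by simpa using hCim)
    rw [← map_neg, ← map_neg, Complex.arg_conj_of_re_nonneg, Complex.arg_conj_of_re_nonneg,
      Complex.arg_conj_of_re_nonneg, Complex.arg_conj_of_re_nonneg] at this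
    · rw [← abs_neg, add_right_comm]
      convert this using 2
      ring
    all_goals simp [hC, hA.le, hB.le]
  have hargC : C.arg = π / 2 := Complex.arg_eq_pi_div_two_iff.2 ⟨hC, hCim⟩
  have hargC' : (-C).arg = -(π / 2) := Complex.arg_eq_neg_pi_div_two_iff.2 (by simp [hC, hCim])
  have hA' : 0 < (-A).re := by simpa using hA
  have hargA : (-A).arg ≤ arctan p := by
    rw [Complex.arg_eq_arctan_im_div_re hA']
    refine arctan_strictMono.monotone ((div_le_iff₀ hA').2 ?_)
    have := hAC.2.2
    simp only [Complex.sub_re, Complex.sub_im, Complex.neg_re, Complex.neg_im, hC] at this ⊢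
    linarith
  have hargB : -arctan q ≤ B.arg := by
    rw [Complex.arg_eq_arctan_im_div_re hB, ← arctan_neg]
    refine arctan_strictMono.monotone ((le_div_iff₀ hB).2 ?_)
    have := hCB.2.1
    simp only [Complex.sub_re, Complex.sub_im, hC] at this
    linarith
  have := Complex.abs_arg_le_pi_div_two_iff.2 hA'.le
  have := Complex.abs_arg_le_pi_div_two_iff.2 hB.le
  have := neg_pi_div_two_lt_arctan p
  have := neg_pi_div_two_lt_arctan q
  rw [abs_le] at *
  constructor <;> linarith

lemma abs_im_integral_div_le_of_mem_slopeSector (hab : a ≤ b) (hf : ContinuousOn f (Icc a b))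
    (hd : ∀ t ∈ Ioo a b, HasDerivAt f (f' t) t)
    (hint : IntervalIntegrable (fun t => f' t / f t) volume a b)
    (hne : ∀ t ∈ Icc a b, f t ≠ 0) (hpq : 0 ≤ p + q)
    (hsec : ∀ t ∈ Ioo a b, f' t ∈ slopeSector p q) :
    |(∫ t in a..b, f' t / f t).im| ≤ π + arctan p + arctan q := by
  have hre_mono {u v : ℝ} (hu : u ∈ Icc a b) (hv : v ∈ Icc a b) (huv : u ≤ v) :
      (f u).re ≤ (f v).re :=
    sub_nonneg.1 (by simpa using (sub_mem_slopeSector hf hd hsec hu hv huv).1)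
  have hpi : π ≤ π + arctan p + arctan q := by
    have : arctan (-q) ≤ arctan p := arctan_strictMono.monotone (by linarith)
    rw [arctan_neg] at this
    linarith
  have ha : a ∈ Icc a b := left_mem_Icc.2 hab
  have hb : b ∈ Icc a b := right_mem_Icc.2 hab
  rcases le_or_gt 0 (f a).re with hA | hA
  · rw [im_integral_div_eq_arg_sub_arg hab hf hd hint hne
      fun t ht => hA.trans (hre_mono ha ht ht.1)]
    exact (Complex.abs_arg_sub_arg_le_pi (hA.trans (hre_mono ha hb hab)) hA).trans hpi
  rcases le_or_gt (f b).re 0 with hB | hB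
  · rw [im_integral_div_eq_arg_neg_sub_arg_neg hab hf hd hint hne
      fun t ht => (hre_mono ht hb ht.2).trans hB]
    refine (Complex.abs_arg_sub_arg_le_pi ?_ ?_).trans hpi <;>
      simp only [Complex.neg_re, neg_nonneg]
    exacts [hB, (hre_mono ha hb hab).trans hB]
  obtain ⟨c, hc, hfc⟩ := intermediate_value_Icc hab (Complex.continuous_re.comp_continuousOn hf)
    ⟨hA.le, hB.le⟩
  have hac : Icc a c ⊆ Icc a b := Icc_subset_Icc_right hc.2
  have hcb : Icc c b ⊆ Icc a b := Icc_subset_Icc_left hc.1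
  have hint' {u v : ℝ} (hu : u ∈ Icc a b) (hv : v ∈ Icc a b) :
      IntervalIntegrable (fun t => f' t / f t) volume u v :=
    hint.mono_set (uIcc_subset_uIcc (by rwa [uIcc_of_le hab]) (by rwa [uIcc_of_le hab]))
  rw [← integral_add_adjacent_intervals (hint' ha hc) (hint' hc hb), Complex.add_im,
    im_integral_div_eq_arg_neg_sub_arg_neg hc.1 (hf.mono hac)
      (fun t ht => hd t ⟨ht.1, ht.2.trans_le hc.2⟩) (hint' ha hc) (fun t ht => hne t (hac ht))
      (fun t ht => hfc ▸ hre_mono (hac ht) hc ht.2),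
    im_integral_div_eq_arg_sub_arg hc.2 (hf.mono hcb)
      (fun t ht => hd t ⟨hc.1.trans_lt ht.1, ht.2⟩) (hint' hc hb) (fun t ht => hne t (hcb ht))
      (fun t ht => hfc ▸ hre_mono hc (hcb ht) ht.1)]
  exact abs_arg_change_across_imaginaryAxis_le hA hB hfc (hne c hc)
    (sub_mem_slopeSector hf hd hsec ha hc hc.1) (sub_mem_slopeSector hf hd hsec hc hb hc.2)

lemma abs_im_integral_div_le_pi_add_of_arg_sub_le {θ : ℝ} (hab : a ≤ b)
    (hf : ContinuousOn f (Icc a b)) (hd : ∀ t ∈ Ioo a b, HasDerivAt f (f' t) t)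
    (hf' : ContinuousOn f' (Icc a b)) (hne : ∀ t ∈ Icc a b, f t ≠ 0)
    (hre : ∀ t ∈ Icc a b, 0 < (f' t).re)
    (hspread : ∀ t ∈ Icc a b, ∀ u ∈ Icc a b, (f' t).arg - (f' u).arg ≤ θ) :
    |(∫ t in a..b, f' t / f t).im| ≤ π + θ := by
  set σ : ℝ → ℝ := fun t => (f' t).im / (f' t).re
  have hσ : ContinuousOn σ (Icc a b) :=
    (Complex.continuous_im.comp_continuousOn hf').div
      (Complex.continuous_re.comp_continuousOn hf') fun t ht => (hre t ht).ne'
  obtain ⟨tp, htp, hmax⟩ := isCompact_Icc.exists_isMaxOn (nonempty_Icc.2 hab) hσ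
  obtain ⟨tq, htq, hmin⟩ := isCompact_Icc.exists_isMinOn (nonempty_Icc.2 hab) hσ
  have hsec (t : ℝ) (ht : t ∈ Icc a b) : f' t ∈ slopeSector (σ tp) (-σ tq) :=
    ⟨(hre t ht).le, by rw [neg_neg, ← le_div_iff₀ (hre t ht)]; exact isMinOn_iff.1 hmin t ht,
      (div_le_iff₀ (hre t ht)).1 (isMaxOn_iff.1 hmax t ht)⟩
  have := abs_im_integral_div_le_of_mem_slopeSector hab hf hd
    ((hf'.div hf hne).intervalIntegrable_of_Icc hab) hne
    (by linarith [isMinOn_iff.1 hmin tp htp]) fun t ht => hsec t (Ioo_subset_Icc_self ht)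
  rw [arctan_neg, ← Complex.arg_eq_arctan_im_div_re (hre tp htp),
    ← Complex.arg_eq_arctan_im_div_re (hre tq htq)] at this
  linarith [hspread tp htp tq htq]

end LogDerivative

lemma abs_im_integral_div_sub_le_pi_add_arcsin {γ γ' : ℝ → ℂ} {a b k : ℝ} {s : ℂ}
    (hab : a ≤ b) (hγ : ContinuousOn γ (Icc a b)) (hd : ∀ t ∈ Ioo a b, HasDerivAt γ (γ' t) t)
    (hγ' : ContinuousOn γ' (Icc a b)) (hreg : ∀ t ∈ Icc a b, γ' t ≠ 0) (hk : k < 1)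
    (hosc : ∀ t ∈ Icc a b, ∀ u ∈ Icc a b, ‖γ' t - γ' u‖ ≤ k * ‖γ' u‖)
    (hs : ∀ t ∈ Icc a b, γ t ≠ s) :
    |(∫ t in a..b, γ' t / (γ t - s)).im| ≤ π + arcsin k := by
  have ha : a ∈ Icc a b := left_mem_Icc.2 hab
  -- Multiplying by `c` turns `γ' a` into `‖γ' a‖ ^ 2 > 0` and leaves the integrand unchanged.
  set c := starRingEnd ℂ (γ' a)
  have hc : c ≠ 0 := by simpa [c] using hreg a ha
  have hre (t : ℝ) (ht : t ∈ Icc a b) : 0 < (c * γ' t).re := by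
    have hca : c * γ' a = ((‖γ' a‖ ^ 2 : ℝ) : ℂ) := by simp [c, Complex.conj_mul']
    have hdev : -(c * (γ' t - γ' a)).re ≤ k * ‖γ' a‖ ^ 2 := by
      refine (neg_le_abs _).trans ((Complex.abs_re_le_norm _).trans ?_)
      rw [norm_mul, Complex.norm_conj, sq, mul_left_comm]
      exact mul_le_mul_of_nonneg_left (hosc t ht a ha) (norm_nonneg _)
    have : 0 < ‖γ' a‖ ^ 2 := pow_pos (norm_pos_iff.2 (hreg a ha)) 2
    rw [show c * γ' t = c * γ' a + c * (γ' t - γ' a) by ring, Complex.add_re, hca,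
      Complex.ofReal_re]
    nlinarith
  have key := abs_im_integral_div_le_pi_add_of_arg_sub_le (f := fun t => c * (γ t - s))
    (f' := fun t => c * γ' t) hab (continuousOn_const.mul (hγ.sub continuousOn_const))
    (fun t ht => ((hd t ht).sub_const s).const_mul c) (continuousOn_const.mul hγ')
    (fun t ht => mul_ne_zero hc (sub_ne_zero.2 (hs t ht))) hre fun t ht u hu => by
      refine (abs_le.1 (Complex.abs_arg_sub_arg_le_arcsin (hre t ht) (hre u hu) hk.le ?_)).2
      rw [← mul_sub, norm_mul, norm_mul, mul_left_comm]
      exact mul_le_mul_of_nonneg_left (hosc t ht u hu) (norm_nonneg _)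
  simpa only [mul_div_mul_left _ _ hc] using key

lemma abs_im_integral_le_ceil_mul {F : ℝ → ℂ} {a b η B : ℝ} (hab : a ≤ b) (hη : 0 < η)
    (hF : IntervalIntegrable F volume a b)
    (hB : ∀ u v, a ≤ u → u ≤ v → v ≤ b → v - u ≤ η → |(∫ t in u..v, F t).im| ≤ B) :
    |(∫ t in a..b, F t).im| ≤ ⌈(b - a) / η⌉ * B := by
  rw [← natCast_ceil_eq_intCast_ceil (div_nonneg (sub_nonneg.2 hab) hη.le)]
  rcases hab.eq_or_lt with rfl | hlt
  · simp
  set n := ⌈(b - a) / η⌉₊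
  have hn : (0 : ℝ) < n := Nat.cast_pos.2 (Nat.ceil_pos.2 (div_pos (sub_pos.2 hlt) hη))
  set h := (b - a) / n
  have hh : 0 ≤ h := div_nonneg (sub_pos.2 hlt).le hn.le
  have hhη : h ≤ η :=
    div_le_of_le_mul₀ hn.le hη.le (by rw [mul_comm, ← div_le_iff₀ hη]; exact Nat.le_ceil _)
  set x : ℕ → ℝ := fun k => a + k * h
  have hx_le (k : ℕ) : x k ≤ x (k + 1) := by simp only [x]; push_cast; nlinarith
  have hx_mem {k : ℕ} (hk : k < n) : a ≤ x k ∧ x (k + 1) ≤ b := by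
    have hkn : (k : ℝ) + 1 ≤ n := by exact_mod_cast hk
    have hba : b - a = n * h := by simp only [h]; field_simp
    simp only [x]; push_cast
    constructor <;> nlinarith
  have hxn : x n = b := by simp only [x, h]; field_simp; ring
  have hint (k : ℕ) (hk : k < n) : IntervalIntegrable F volume (x k) (x (k + 1)) :=
    hF.mono_set <| by
      rw [uIcc_of_le (hx_le k), uIcc_of_le hab]
      exact Icc_subset_Icc (hx_mem hk).1 (hx_mem hk).2
  calc |(∫ t in a..b, F t).im|
      = |(∑ k ∈ Finset.range n, ∫ t in x k..x (k + 1), F t).im| := by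
        rw [sum_integral_adjacent_intervals hint, hxn]; simp [x]
    _ ≤ ∑ k ∈ Finset.range n, |(∫ t in x k..x (k + 1), F t).im| := by
        rw [Complex.im_sum]; exact Finset.abs_sum_le_sum_abs _ _
    _ ≤ ∑ _k ∈ Finset.range n, B := Finset.sum_le_sum fun k hk =>
        hB _ _ (hx_mem (Finset.mem_range.1 hk)).1 (hx_le k) (hx_mem (Finset.mem_range.1 hk)).2
          (by simp only [x]; push_cast; linarith)
    _ = n * B := by simp

/-- Uniform bound on the imaginary part of the logarithmic path integral
`Ψ(s) = ∫₀¹ γ′(t)/(γ(t)−s) dt` for a C¹ path whose derivative is bounded below by `m` and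
has oscillation at most `m/10` at scale `η`. -/
theorem im_log_integral_bound
    (γ γ' : ℝ → ℂ)
    (hderiv : ∀ t ∈ Set.Icc (0:ℝ) 1, HasDerivWithinAt γ (γ' t) (Set.Icc 0 1) t)
    (hcont : ContinuousOn γ' (Set.Icc 0 1))
    (m : ℝ) (hm : 0 < m)
    (hlow : ∀ t ∈ Set.Icc (0:ℝ) 1, m ≤ ‖γ' t‖)
    (η : ℝ) (hη : 0 < η)
    (hmod : ∀ t ∈ Set.Icc (0:ℝ) 1, ∀ u ∈ Set.Icc (0:ℝ) 1, |t - u| ≤ η →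
      ‖γ' t - γ' u‖ ≤ m / 10) :
    ∀ s : ℂ, s ∉ γ '' Set.Icc 0 1 →
      |(∫ t in (0:ℝ)..1, γ' t / (γ t - s)).im| ≤
        ((⌈1/η⌉ : ℤ) : ℝ) * (Real.pi + Real.arcsin (1/10)) := by
  intro s hs
  have hγ : ContinuousOn γ (Icc 0 1) := fun t ht => (hderiv t ht).continuousWithinAt
  have hd (t : ℝ) (ht : t ∈ Ioo (0 : ℝ) 1) : HasDerivAt γ (γ' t) t :=
    (hderiv t (Ioo_subset_Icc_self ht)).hasDerivAt (Icc_mem_nhds ht.1 ht.2)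
  have hne (t : ℝ) (ht : t ∈ Icc (0 : ℝ) 1) : γ t ≠ s := fun h => hs ⟨t, ht, h⟩
  have hint : IntervalIntegrable (fun t => γ' t / (γ t - s)) volume 0 1 :=
    (hcont.div (hγ.sub continuousOn_const) fun t ht => sub_ne_zero.2 (hne t ht))
      |>.intervalIntegrable_of_Icc zero_le_one
  have hpiece (u v : ℝ) (hu : 0 ≤ u) (huv : u ≤ v) (hv : v ≤ 1) (hlen : v - u ≤ η) :
      |(∫ t in u..v, γ' t / (γ t - s)).im| ≤ π + arcsin (1 / 10) := by
    have hsub : Icc u v ⊆ Icc 0 1 := Icc_subset_Icc hu hv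
    refine abs_im_integral_div_sub_le_pi_add_arcsin huv (hγ.mono hsub)
      (fun t ht => hd t ⟨hu.trans_lt ht.1, ht.2.trans_le hv⟩) (hcont.mono hsub)
      (fun t ht => norm_pos_iff.1 (hm.trans_le (hlow t (hsub ht)))) (by norm_num)
      (fun t ht r hr => ?_) (fun t ht => hne t (hsub ht))
    have hclose : |t - r| ≤ η :=
      abs_sub_le_iff.2 ⟨by linarith [ht.2, hr.1], by linarith [ht.1, hr.2]⟩
    linarith [hmod t (hsub ht) r (hsub hr) hclose, hlow r (hsub hr)]
  simpa using abs_im_integral_le_ceil_mul zero_le_one hη hint hpiece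
end

section
/- Logarithmic-sum bound for separated points near a basepoint (counting estimate in the proof of the parallel-transport limit theorem): Let z₀ ∈ ℂ, let 0 < ρ ≤ 1, let 0 < δ < ε ≤ 1, and let S be a finite set of points of ℂ such that: every s ∈ S satisfies ρ ≤ |s − z₀| ≤ ε, and the open disks B(s, δ), s ∈ S, are pairwise disjoint. Then Σ_{s ∈ S} log(1/|z₀ − s|) ≤ log(1/ρ) + 9π·(2ε/δ)²·( (4/9)·log 2 + (1/3)·log(1/ε) ). -/
/-!
At most one point of `S` lies within `δ` of `z₀`, and its term is at most `log (1/ρ)`.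
For the others, comparing volumes of the disjoint disks with a disk around `z₀` shows that at
most `(2R/δ)²` of them lie within distance `R` of `z₀`; halving `R` repeatedly then bounds
`∑ log (ε/|z₀ - s|)` by a geometric series, and the remaining `log (1/ε)` per point is paid by
the count at `R = ε`.
-/

open Metric Module MeasureTheory Real

theorem card_mul_pow_finrank_le_of_pairwiseDisjoint_ball {E : Type*} [NormedAddCommGroup E]
    [NormedSpace ℝ E] [FiniteDimensional ℝ E] {T : Finset E} {z₀ : E} {δ R : ℝ}
    (hδ : 0 < δ) (hR : 0 ≤ R) (hT : ∀ s ∈ T, dist s z₀ ≤ R)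
    (hdisj : (T : Set E).PairwiseDisjoint (ball · δ)) :
    (T.card : ℝ) * δ ^ finrank ℝ E ≤ (R + δ) ^ finrank ℝ E := by
  borelize E
  let μ : Measure E := Measure.addHaar
  have hvol : (T.card : ENNReal) * ENNReal.ofReal (δ ^ finrank ℝ E) * μ (ball 0 1) ≤
      ENNReal.ofReal ((R + δ) ^ finrank ℝ E) * μ (ball 0 1) :=
    calc (T.card : ENNReal) * ENNReal.ofReal (δ ^ finrank ℝ E) * μ (ball 0 1)
        = μ (⋃ s ∈ T, ball s δ) := by
          rw [measure_biUnion_finset hdisj fun s _ => measurableSet_ball]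
          simp only [μ.addHaar_ball_of_pos _ hδ, Finset.sum_const, nsmul_eq_mul, mul_assoc]
      _ ≤ μ (ball z₀ (R + δ)) := measure_mono <| Set.iUnion₂_subset fun s hs =>
          ball_subset_ball' (by linarith [hT s hs])
      _ = ENNReal.ofReal ((R + δ) ^ finrank ℝ E) * μ (ball 0 1) :=
          μ.addHaar_ball_of_pos _ (by positivity)
  have hcancel := (ENNReal.mul_le_mul_iff_left (measure_ball_pos μ _ zero_lt_one).ne'
    measure_ball_lt_top.ne).1 hvol
  rwa [← ENNReal.ofReal_natCast, ← ENNReal.ofReal_mul (Nat.cast_nonneg _),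
    ENNReal.ofReal_le_ofReal_iff (by positivity)] at hcancel

theorem card_le_sq_of_pairwiseDisjoint_ball {T : Finset ℂ} {z₀ : ℂ} {δ R : ℝ} (hδ : 0 < δ)
    (hT : ∀ s ∈ T, δ ≤ dist s z₀ ∧ dist s z₀ ≤ R)
    (hdisj : (T : Set ℂ).PairwiseDisjoint (ball · δ)) :
    (T.card : ℝ) ≤ (2 * R / δ) ^ 2 := by
  obtain rfl | ⟨s, hs⟩ := T.eq_empty_or_nonempty
  · simpa using sq_nonneg _
  have hδR : δ ≤ R := (hT s hs).1.trans (hT s hs).2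
  have hpack := card_mul_pow_finrank_le_of_pairwiseDisjoint_ball hδ (hδ.le.trans hδR)
    (fun s hs => (hT s hs).2) hdisj
  rw [Complex.finrank_real_complex] at hpack
  rw [div_pow, le_div_iff₀ (by positivity)]
  calc (T.card : ℝ) * δ ^ 2 ≤ (R + δ) ^ 2 := hpack
    _ ≤ (2 * R) ^ 2 := by gcongr <;> linarith

theorem card_filter_dist_lt_le_one {X : Type*} [PseudoMetricSpace X] {S : Finset X} {z₀ : X}
    {δ : ℝ} (hdisj : (S : Set X).PairwiseDisjoint (ball · δ)) :
    (S.filter (dist · z₀ < δ)).card ≤ 1 :=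
  Finset.card_le_one.2 fun _ ha _ hb =>
    hdisj.elim_set (Finset.mem_filter.1 ha).1 (Finset.mem_filter.1 hb).1 z₀
      (mem_ball_comm.1 (Finset.mem_filter.1 ha).2) (mem_ball_comm.1 (Finset.mem_filter.1 hb).2)

theorem sum_filter_dist_lt_log_one_div_le {X : Type*} [PseudoMetricSpace X] {S : Finset X}
    {z₀ : X} {ρ δ : ℝ} (hρ0 : 0 < ρ) (hρ1 : ρ ≤ 1) (hS : ∀ s ∈ S, ρ ≤ dist s z₀)
    (hdisj : (S : Set X).PairwiseDisjoint (ball · δ)) :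
    ∑ s ∈ S.filter (dist · z₀ < δ), log (1 / dist s z₀) ≤ log (1 / ρ) :=
  calc _ ≤ (S.filter (dist · z₀ < δ)).card • log (1 / ρ) :=
        Finset.sum_le_card_nsmul _ _ _ fun s hs => by
          have hρs := hS s (Finset.mem_filter.1 hs).1
          exact log_le_log (one_div_pos.2 (hρ0.trans_le hρs)) (one_div_le_one_div_of_le hρ0 hρs)
    _ ≤ 1 • log (1 / ρ) := nsmul_le_nsmul_left
        (log_nonneg (by rw [le_div_iff₀ hρ0]; linarith)) (card_filter_dist_lt_le_one hdisj)
    _ = log (1 / ρ) := one_nsmul _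

/-- Replacing `R` by `R/2` costs `log 2` per point, at most `(2R/δ)² log 2` in total, and only
drops terms that become negative; the recursion is a geometric series with ratio `1/4`. -/
theorem sum_log_div_dist_le {T : Finset ℂ} {z₀ : ℂ} {δ R : ℝ} (hδ : 0 < δ)
    (hT : ∀ s ∈ T, δ ≤ dist s z₀ ∧ dist s z₀ ≤ R)
    (hdisj : (T : Set ℂ).PairwiseDisjoint (ball · δ)) :
    ∑ s ∈ T, log (R / dist s z₀) ≤ 16 / 3 * log 2 * (R / δ) ^ 2 := by
  obtain ⟨n, hn⟩ := pow_unbounded_of_one_lt (R / δ) one_lt_two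
  induction n generalizing R T with
  | zero =>
    rw [pow_zero, div_lt_one hδ] at hn
    have hT_empty : T = ∅ := Finset.eq_empty_of_forall_notMem fun s hs => by
      linarith [hT s hs]
    simp only [hT_empty, Finset.sum_empty]
    positivity
  | succ n ih =>
    obtain rfl | ⟨s, hs⟩ := T.eq_empty_or_nonempty
    · simp only [Finset.sum_empty]
      positivity
    have hR : 0 < R := hδ.trans_le ((hT s hs).1.trans (hT s hs).2)
    have hinner : ∑ s ∈ T.filter (dist · z₀ ≤ R / 2), log (R / 2 / dist s z₀) ≤
        16 / 3 * log 2 * (R / 2 / δ) ^ 2 :=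
      ih (fun s hs => ⟨(hT s (Finset.mem_filter.1 hs).1).1, (Finset.mem_filter.1 hs).2⟩)
        (hdisj.subset (Finset.coe_subset.2 (Finset.filter_subset _ _)))
        (by rw [div_right_comm, div_lt_iff₀ two_pos, ← pow_succ]; exact hn)
    have hhalf : ∑ s ∈ T, log (R / 2 / dist s z₀) ≤
        ∑ s ∈ T.filter (dist · z₀ ≤ R / 2), log (R / 2 / dist s z₀) := by
      rw [Finset.sum_filter]
      refine Finset.sum_le_sum fun s hs => ?_
      split_ifs with hsR
      · exact le_rfl
      · have hpos : 0 < dist s z₀ := hδ.trans_le (hT s hs).1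
        exact log_nonpos (by positivity) ((div_le_one hpos).2 (by linarith))
    calc ∑ s ∈ T, log (R / dist s z₀) = ∑ s ∈ T, (log 2 + log (R / 2 / dist s z₀)) := by
          refine Finset.sum_congr rfl fun s hs => ?_
          have hpos : 0 < dist s z₀ := hδ.trans_le (hT s hs).1
          rw [← log_mul two_ne_zero (by positivity)]
          ring_nf
      _ = T.card * log 2 + ∑ s ∈ T, log (R / 2 / dist s z₀) := by
          rw [Finset.sum_add_distrib, Finset.sum_const, nsmul_eq_mul]
      _ ≤ (2 * R / δ) ^ 2 * log 2 + 16 / 3 * log 2 * (R / 2 / δ) ^ 2 := by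
          gcongr
          · exact card_le_sq_of_pairwiseDisjoint_ball hδ hT hdisj
          · exact hhalf.trans hinner
      _ = 16 / 3 * log 2 * (R / δ) ^ 2 := by ring

theorem sum_log_one_div_dist_le {T : Finset ℂ} {z₀ : ℂ} {δ R : ℝ} (hδ : 0 < δ) (hR : 0 < R)
    (hR1 : R ≤ 1) (hT : ∀ s ∈ T, δ ≤ dist s z₀ ∧ dist s z₀ ≤ R)
    (hdisj : (T : Set ℂ).PairwiseDisjoint (ball · δ)) :
    ∑ s ∈ T, log (1 / dist s z₀) ≤ (2 * R / δ) ^ 2 * (4 / 3 * log 2 + log (1 / R)) := by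
  have hlogR : 0 ≤ log (1 / R) := log_nonneg (by rw [le_div_iff₀ hR]; linarith)
  calc ∑ s ∈ T, log (1 / dist s z₀) = ∑ s ∈ T, log (R / dist s z₀) + T.card * log (1 / R) := by
        rw [← nsmul_eq_mul, ← Finset.sum_const, ← Finset.sum_add_distrib]
        refine Finset.sum_congr rfl fun s hs => ?_
        have hpos : 0 < dist s z₀ := hδ.trans_le (hT s hs).1
        rw [← log_mul (by positivity) (by positivity)]
        field_simp
    _ ≤ 16 / 3 * log 2 * (R / δ) ^ 2 + (2 * R / δ) ^ 2 * log (1 / R) := by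
        gcongr
        · exact sum_log_div_dist_le hδ hT hdisj
        · exact card_le_sq_of_pairwiseDisjoint_ball hδ hT hdisj
    _ = (2 * R / δ) ^ 2 * (4 / 3 * log 2 + log (1 / R)) := by ring

/-- Logarithmic-sum bound for separated points near a basepoint: if the points of a
finite set `S` lie at distance between `ρ` and `ε` from `z₀` and carry pairwise disjoint
disks of radius `δ`, then `Σ_{s∈S} log(1/|z₀−s|)` is bounded by
`log(1/ρ) + 9π(2ε/δ)²((4/9)log 2 + (1/3)log(1/ε))`. -/
theorem log_sum_separated_points
    (z₀ : ℂ) (ρ δ ε : ℝ)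
    (hρ0 : 0 < ρ) (hρ1 : ρ ≤ 1)
    (hδ0 : 0 < δ) (hδε : δ < ε) (hε1 : ε ≤ 1)
    (S : Finset ℂ)
    (hmem : ∀ s ∈ S, ρ ≤ ‖s - z₀‖ ∧ ‖s - z₀‖ ≤ ε)
    (hdisj : Set.PairwiseDisjoint (S : Set ℂ) (fun s => Metric.ball s δ)) :
    ∑ s ∈ S, Real.log (1 / ‖z₀ - s‖) ≤
      Real.log (1 / ρ) + 9 * Real.pi * (2 * ε / δ)^2 *
        ((4 / 9) * Real.log 2 + (1 / 3) * Real.log (1 / ε)) := by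
  have hε0 : 0 < ε := hδ0.trans hδε
  simp only [← dist_eq_norm] at hmem
  simp only [← dist_eq_norm, dist_comm z₀]
  rw [← Finset.sum_filter_add_sum_filter_not S (dist · z₀ < δ)]
  have hnear := sum_filter_dist_lt_log_one_div_le hρ0 hρ1 (fun s hs => (hmem s hs).1) hdisj
  have hfar := sum_log_one_div_dist_le (T := S.filter (¬ dist · z₀ < δ)) hδ0 hε0 hε1
    (fun s hs => ⟨not_lt.1 (Finset.mem_filter.1 hs).2, (hmem s (Finset.mem_filter.1 hs).1).2⟩)
    (hdisj.subset (Finset.coe_subset.2 (Finset.filter_subset _ _)))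
  have hconst : 4 / 3 * log 2 + log (1 / ε) ≤ 9 * π * (4 / 9 * log 2 + 1 / 3 * log (1 / ε)) := by
    have hlog2 : 0 < log 2 := log_pos one_lt_two
    have hlogε : 0 ≤ log (1 / ε) := log_nonneg (by rw [le_div_iff₀ hε0]; linarith)
    nlinarith [pi_gt_three]
  have := mul_le_mul_of_nonneg_left hconst (sq_nonneg (2 * ε / δ))
  linarith
end
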